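/- arXiv:2110.02012 — 3 statements merged into one kernel-verified Lean document; each statement's English description precedes it below -/
import Mathlib

section
/- Let H be a separable Hilbert space, Ψ* : H × H → ℝ a dissipation potential (strictly convex in the second argument, with inf over ξ attained at ξ = 0 with value 0, twice continuously Gâteaux differentiable in ξ), F : H → ℝ twice continuously Gâteaux differentiable, A : H → H bounded linear, and π ∈ H with DF(π) = 0. If A x = D_ξΨ*(x, -DF(x)) for all x ∈ H, then A = -D²_ξΨ*(π, 0) ∘ D²F(π); i.e. A x = -K̂ DF̂(x) for the canonical gradient system with K̂ := D²_ξΨ*(π, 0) (a positive semidefinite symmetric operator) and F̂(x) := ½⟨D²F(π)x, x⟩. -/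
open RealInnerProductSpace

/-! Since `Ψ*(x, ·)` is minimal at `0`, its gradient `D_ξΨ*(x, 0)` vanishes for every `x`; hence the
derivative `L` of `(x, ξ) ↦ D_ξΨ*(x, ξ)` at `(π, 0)` kills the `x`-direction. Differentiating the
identity `A x = D_ξΨ*(x, -DF x)` at `π` by the chain rule, and using `DF π = 0`, gives
`A x = L (x, -B̂ x) = L (0, -B̂ x) = -K̂ (B̂ x)`. -/

theorem eq_zero_of_isLocalMin_of_hasLineDerivAt_inner {E : Type*} [NormedAddCommGroup E]
    [InnerProductSpace ℝ E] {f : E → ℝ} {a g : E} (hmin : IsLocalMin f a)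
    (hg : ∀ v, HasLineDerivAt ℝ f ⟪g, v⟫ a v) : g = 0 :=
  inner_self_eq_zero.1 (hmin.hasLineDerivAt_eq_zero (hg g))

section Graph

variable {𝕜 : Type*} [NontriviallyNormedField 𝕜]
  {E F G : Type*} [NormedAddCommGroup E] [NormedSpace 𝕜 E] [NormedAddCommGroup F] [NormedSpace 𝕜 F]
  [NormedAddCommGroup G] [NormedSpace 𝕜 G]
  {f : E × F → G} {L : E × F →L[𝕜] G} {a : E} {b : F}

theorem HasFDerivAt.map_inl_eq_zero_of_forall_eq {c : G} (hf : HasFDerivAt f L (a, b))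
    (hc : ∀ x, f (x, b) = c) (v : E) : L (v, 0) = 0 := by
  have hslice : HasFDerivAt (fun x => f (x, b)) (L.comp (ContinuousLinearMap.inl 𝕜 E F)) a :=
    hf.comp a (hasFDerivAt_prodMk_left a b)
  simp only [hc] at hslice
  simpa using congr($(hslice.unique (hasFDerivAt_const c a)) v)

theorem ContinuousLinearMap.apply_eq_of_forall_eq_comp_graph (A : E →L[𝕜] G) {g : E → F}
    {g' : E →L[𝕜] F} (hf : HasFDerivAt f L (a, b)) (hg : HasFDerivAt g g' a) (hb : g a = b)
    (hA : ∀ x, A x = f (x, g x)) (v : E) : A v = L (v, g' v) := by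
  subst hb
  have hgraph : HasFDerivAt (fun x => f (x, g x)) (L.comp ((ContinuousLinearMap.id 𝕜 E).prod g')) a :=
    hf.comp a ((hasFDerivAt_id a).prodMk hg)
  simp only [← hA] at hgraph
  exact congr($(A.hasFDerivAt.unique hgraph) v)

end Graph

theorem generalised_to_canonical_gradient_system_general
    {H : Type*} [NormedAddCommGroup H] [InnerProductSpace ℝ H]
    (Psi : H → H → ℝ)                  -- dissipation potential Ψ*(x, ξ)
    (DxiPsi : H → H → H)               -- ξ-Gâteaux gradient of Ψ*
    (DF : H → H)           -- free energy and its Gâteaux gradient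
    (A : H →L[ℝ] H) (π : H)
    (L : H × H →L[ℝ] H)                -- total derivative of (x, ξ) ↦ D_ξΨ*(x, ξ) at (π, 0)
    (Khat Bhat : H →L[ℝ] H)            -- K̂ = D²_ξΨ*(π,0), B̂ = D²F(π)
    -- Ψ* is a dissipation potential:
    (hmin : ∀ x ξ : H, Psi x 0 ≤ Psi x ξ)
    (hgrad : ∀ x ξ v : H, HasLineDerivAt ℝ (Psi x) ⟪DxiPsi x ξ, v⟫ ξ v)
    -- second derivative data at (π, 0):
    (hDeriv : HasFDerivAt (fun p : H × H => DxiPsi p.1 p.2) L (π, 0))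
    (hKhat : ∀ v : H, L (0, v) = Khat v)
    -- F: Gâteaux gradient DF, twice differentiable at π with second derivative B̂:
    (hBhat : HasFDerivAt DF Bhat π)
    -- equilibrium and gradient-flow structure:
    (hpi : DF π = 0)
    (hA : ∀ x : H, A x = DxiPsi x (-DF x)) :
    ∀ x : H, A x = -(Khat (Bhat x)) := by
  have hDxiPsi_zero (y : H) : DxiPsi y 0 = 0 :=
    eq_zero_of_isLocalMin_of_hasLineDerivAt_inner
      (IsMinOn.isLocalMin (fun ξ _ => hmin y ξ) Filter.univ_mem) (hgrad y 0)
  have hL_inl := hDeriv.map_inl_eq_zero_of_forall_eq hDxiPsi_zero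
  have hA_lin := ContinuousLinearMap.apply_eq_of_forall_eq_comp_graph A hDeriv hBhat.neg (neg_eq_zero.2 hpi) hA
  intro x
  calc A x = L (x, -Bhat x) := hA_lin x
    _ = L (x, 0) + L (0, -Bhat x) := by rw [← map_add, Prod.mk_add_mk, add_zero, zero_add]
    _ = -(Khat (Bhat x)) := by rw [hL_inl, hKhat, zero_add, map_neg]

theorem generalised_to_canonical_gradient_system
    {H : Type*} [NormedAddCommGroup H] [InnerProductSpace ℝ H] [CompleteSpace H]
    [TopologicalSpace.SeparableSpace H]
    (Psi : H → H → ℝ)                  -- dissipation potential Ψ*(x, ξ)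
    (DxiPsi : H → H → H)               -- ξ-Gâteaux gradient of Ψ*
    (F : H → ℝ) (DF : H → H)           -- free energy and its Gâteaux gradient
    (A : H →L[ℝ] H) (π : H)
    (L : H × H →L[ℝ] H)                -- total derivative of (x, ξ) ↦ D_ξΨ*(x, ξ) at (π, 0)
    (Khat Bhat : H →L[ℝ] H)            -- K̂ = D²_ξΨ*(π,0), B̂ = D²F(π)
    -- Ψ* is a dissipation potential:
    (hstrict : ∀ x : H, StrictConvexOn ℝ Set.univ (Psi x))
    (hzero : ∀ x : H, Psi x 0 = 0)
    (hmin : ∀ x ξ : H, Psi x 0 ≤ Psi x ξ)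
    (hgrad : ∀ x ξ v : H, HasLineDerivAt ℝ (Psi x) ⟪DxiPsi x ξ, v⟫ ξ v)
    -- second derivative data at (π, 0):
    (hDeriv : HasFDerivAt (fun p : H × H => DxiPsi p.1 p.2) L (π, 0))
    (hKhat : ∀ v : H, L (0, v) = Khat v)
    (hKhatsa : IsSelfAdjoint Khat)
    (hKhatpos : ∀ v : H, 0 ≤ ⟪Khat v, v⟫)
    -- F: Gâteaux gradient DF, twice differentiable at π with second derivative B̂:
    (hFgrad : ∀ x v : H, HasLineDerivAt ℝ F ⟪DF x, v⟫ x v)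
    (hBhat : HasFDerivAt DF Bhat π)
    (hBhatsa : IsSelfAdjoint Bhat)
    -- equilibrium and gradient-flow structure:
    (hpi : DF π = 0)
    (hA : ∀ x : H, A x = DxiPsi x (-DF x)) :
    ∀ x : H, A x = -(Khat (Bhat x)) :=
  generalised_to_canonical_gradient_system_general Psi DxiPsi DF A π L Khat Bhat hmin hgrad hDeriv
    hKhat hBhat hpi hA
end

section
/- Let A ∈ ℝ^{3×3} be the matrix with rows (-2, 1, 1), (1, -2, 1), (1, 1, -2), let F(x) = Σᵢ xᵢ log(3xᵢ) on the open positive simplex, and let K(x) be the 3×3 matrix with entries K(x)ᵢᵢ = (1/3)Σ_{j≠i} Λ(3xᵢ, 3xⱼ) and K(x)ᵢⱼ = -(1/3)Λ(3xᵢ, 3xⱼ) for i ≠ j, where Λ(a,b) = (a-b)/(log a - log b) for a ≠ b and Λ(a,a) = a. Then for all x with xᵢ > 0 for each i: A x = -K(x) ∇F(x). -/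
open Matrix

/-- The logarithmic mean of two positive reals. -/
noncomputable def logMean (a b : ℝ) : ℝ :=
  if a = b then a else (a - b) / (Real.log a - Real.log b)

lemma logMean_key (a b : ℝ) (ha : 0 < a) (hb : 0 < b) :
    logMean a b * (Real.log b - Real.log a) = b - a := by
  unfold logMean
  by_cases h : a = b
  · simp [h]
  · have hlog : Real.log a ≠ Real.log b :=
      fun he => h (Real.log_injOn_pos (Set.mem_Ioi.mpr ha) (Set.mem_Ioi.mpr hb) he)
    have hne : Real.log a - Real.log b ≠ 0 := sub_ne_zero.mpr hlog
    rw [if_neg h, show Real.log b - Real.log a = -(Real.log a - Real.log b) by ring,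
      mul_neg, div_mul_cancel₀ _ hne]
    ring

theorem reversible_markov_gradient_flow
    (A : Matrix (Fin 3) (Fin 3) ℝ)
    (hA : A = !![-2, 1, 1; 1, -2, 1; 1, 1, -2])
    (K : (Fin 3 → ℝ) → Matrix (Fin 3) (Fin 3) ℝ)
    (hK : ∀ x : Fin 3 → ℝ, K x = Matrix.of fun i j =>
      if i = j then (1 / 3) * ∑ k ∈ Finset.univ.erase i, logMean (3 * x i) (3 * x k)
      else -(1 / 3) * logMean (3 * x i) (3 * x j)) :
    ∀ x : Fin 3 → ℝ, (∀ i, 0 < x i) →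
      A.mulVec x = -((K x).mulVec fun i => Real.log (3 * x i) + 1) := by
  intro x hx
  have h0 : (0:ℝ) < 3 * x 0 := by linarith [hx 0]
  have h1 : (0:ℝ) < 3 * x 1 := by linarith [hx 1]
  have h2 : (0:ℝ) < 3 * x 2 := by linarith [hx 2]
  subst hA
  funext i
  fin_cases i <;>
    simp [hK, Matrix.mulVec, dotProduct, Fin.sum_univ_three,
      Finset.sum_erase_eq_sub, Fin.isValue, show ((0:Fin 3) ≠ 1) by decide,
      show ((0:Fin 3) ≠ 2) by decide, show ((1:Fin 3) ≠ 0) by decide,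
      show ((1:Fin 3) ≠ 2) by decide, show ((2:Fin 3) ≠ 0) by decide,
      show ((2:Fin 3) ≠ 1) by decide, Finset.sum_ite_eq] <;>
  [ (have e1 := logMean_key _ _ h0 h1; have e2 := logMean_key _ _ h0 h2);
    (have e1 := logMean_key _ _ h1 h0; have e2 := logMean_key _ _ h1 h2);
    (have e1 := logMean_key _ _ h2 h0; have e2 := logMean_key _ _ h2 h1)] <;>
  nlinarith [e1, e2]
end

section
/- Let A ∈ ℝ^{3×3} have rows (-2, 0, 2), (1, -3, 2), (1, 3, -4), let B = (1/3)·[[4,-4,0],[-4,6,-2],[0,-2,2]] and K = [[3, 3/2, -3/2],[3/2, 9/4, -3/4],[-3/2, -3/4, 21/4]]. Then K is symmetric positive definite, B is symmetric, and A x = -K B x for all x ∈ ℝ³ (i.e. A = -KB), exhibiting A as the flow of the canonical gradient system with F(x) = ½ xᵀBx. -/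
/-!
`K` is positive definite because it has the `LDLᵀ` factorisation `K = Lᵀ D L` with
`L = !![1, 1/2, -1/2; 0, 1, 0; 0, 0, 1]` unit upper triangular and `D = diag(3, 3/2, 9/2)`,
i.e. `xᵀ K x = 3 (x₀ + x₁/2 - x₂/2)² + (3/2) x₁² + (9/2) x₂²`.
-/

open Matrix

theorem Matrix.posDef_conjTranspose_mul_diagonal_mul {n K : Type*} [Fintype n] [DecidableEq n]
    [Field K] [PartialOrder K] [StarRing K] [StarOrderedRing K]
    {L : Matrix n n K} (hL : IsUnit L.det) {d : n → K} (hd : ∀ i, 0 < d i) :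
    (Lᴴ * diagonal d * L).PosDef :=
  (PosDef.diagonal hd).conjTranspose_mul_mul_same <|
    mulVec_injective_iff_isUnit.2 <| (isUnit_iff_isUnit_det L).2 hL

theorem nonreversible_markov_canonical_gradient_system
    (A B K : Matrix (Fin 3) (Fin 3) ℝ)
    (hA : A = !![-2, 0, 2; 1, -3, 2; 1, 3, -4])
    (hB : B = (1 / 3 : ℝ) • !![4, -4, 0; -4, 6, -2; 0, -2, 2])
    (hK : K = !![3, 3/2, -3/2; 3/2, 9/4, -3/4; -3/2, -3/4, 21/4]) :
    K.PosDef ∧ K.IsSymm ∧ B.IsSymm ∧ ∀ x : Fin 3 → ℝ, A.mulVec x = -(K * B).mulVec x := by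
  set L : Matrix (Fin 3) (Fin 3) ℝ := !![1, 1/2, -1/2; 0, 1, 0; 0, 0, 1]
  have hL : L.det = 1 := by simp [L, det_fin_three]
  have hLDL : K = Lᴴ * diagonal ![3, 3/2, 9/2] * L := by
    ext i j
    fin_cases i <;> fin_cases j <;> simp [hK, L, mul_apply, Fin.sum_univ_three] <;> norm_num
  have hAKB : A = -(K * B) := by
    ext i j
    fin_cases i <;> fin_cases j <;> norm_num [hA, hB, hK]
  refine ⟨?_, ?_, ?_, fun x => by rw [hAKB, neg_mulVec]⟩
  · rw [hLDL]
    exact posDef_conjTranspose_mul_diagonal_mul (hL ▸ isUnit_one) (by simp [Fin.forall_fin_succ])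
  · exact IsSymm.ext fun i j => by fin_cases i <;> fin_cases j <;> simp [hK]
  · exact IsSymm.ext fun i j => by fin_cases i <;> fin_cases j <;> simp [hB]
end
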